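/- arXiv:1812.11669 — 4 statements merged into one kernel-verified Lean document; each statement's English description precedes it below -/
import Mathlib

section
/- For arbitrary real constants c > 0 and d ∈ ℝ, the integral ∫₀^∞ e^{−cξ} N(d√ξ) dξ equals (1/(2c))·(1 + d/√(d² + 2c)), where N is the standard normal cumulative distribution function. -/
open Real Set MeasureTheory

/-- The standard normal cumulative distribution function. -/
noncomputable def stdNormalCDF (x : ℝ) : ℝ :=
  (Real.sqrt (2 * Real.pi))⁻¹ * ∫ t in Set.Iic x, Real.exp (-t ^ 2 / 2)

/-!
Integrating by parts, `-e^{-cξ} N(d√ξ) / c` has derivative `e^{-cξ} N(d√ξ)` up to the term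
`d e^{-cξ} φ(d√ξ) / (2c√ξ)`, where `φ = N'` is the standard normal density. Since
`e^{-cξ} φ(d√ξ) = φ(s√ξ)` with `s = √(d² + 2c)`, that term is the derivative of `(d / (c s)) N(s√ξ)`.
So the integrand has the explicit primitive `(d/s · N(s√ξ) - e^{-cξ} N(d√ξ)) / c`, which equals
`(d/s - 1) / (2c)` at `0` and tends to `d / (c s)` at infinity.
-/

open Filter Topology

lemma exp_neg_sq_div_two_eq (t : ℝ) : exp (-t ^ 2 / 2) = exp (-(1 / 2) * t ^ 2) := by
  ring_nf

lemma integrable_exp_neg_sq_div_two : Integrable fun t : ℝ => exp (-t ^ 2 / 2) := by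
  simpa only [exp_neg_sq_div_two_eq] using integrable_exp_neg_mul_sq (by norm_num : (0 : ℝ) < 1 / 2)

lemma integral_exp_neg_sq_div_two : ∫ t, exp (-t ^ 2 / 2) = √(2 * π) := by
  simp only [exp_neg_sq_div_two_eq, integral_gaussian]
  norm_num [mul_comm]

lemma integral_Iic_zero_exp_neg_sq_div_two :
    ∫ t in Iic (0 : ℝ), exp (-t ^ 2 / 2) = √(2 * π) / 2 := by
  have hsymm := integral_comp_neg_Iic (0 : ℝ) fun t => exp (-t ^ 2 / 2)
  simp only [neg_sq, neg_zero] at hsymm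
  rw [hsymm]
  simp only [exp_neg_sq_div_two_eq, integral_gaussian_Ioi]
  norm_num [mul_comm]

lemma hasDerivAt_stdNormalCDF (x : ℝ) :
    HasDerivAt stdNormalCDF ((√(2 * π))⁻¹ * exp (-x ^ 2 / 2)) x := by
  have hcont : Continuous fun t : ℝ => exp (-t ^ 2 / 2) := by fun_prop
  have hsplit : stdNormalCDF = fun y => (√(2 * π))⁻¹ *
      ((∫ t in Iic (0 : ℝ), exp (-t ^ 2 / 2)) + ∫ t in (0 : ℝ)..y, exp (-t ^ 2 / 2)) := by
    funext y
    rw [stdNormalCDF, ← intervalIntegral.integral_Iic_sub_Iic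
      integrable_exp_neg_sq_div_two.integrableOn integrable_exp_neg_sq_div_two.integrableOn]
    ring
  rw [hsplit]
  exact ((intervalIntegral.integral_hasDerivAt_right (hcont.intervalIntegrable 0 x)
    hcont.stronglyMeasurable.stronglyMeasurableAtFilter hcont.continuousAt).const_add _).const_mul _

lemma continuous_stdNormalCDF : Continuous stdNormalCDF :=
  continuous_iff_continuousAt.2 fun x => (hasDerivAt_stdNormalCDF x).continuousAt

lemma stdNormalCDF_zero : stdNormalCDF 0 = 1 / 2 := by
  have : √(2 * π) ≠ 0 := by positivity
  rw [stdNormalCDF, integral_Iic_zero_exp_neg_sq_div_two]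
  field_simp

lemma stdNormalCDF_nonneg (x : ℝ) : 0 ≤ stdNormalCDF x :=
  mul_nonneg (by positivity) (setIntegral_nonneg measurableSet_Iic fun t _ => (exp_pos _).le)

lemma stdNormalCDF_le_one (x : ℝ) : stdNormalCDF x ≤ 1 := by
  have hle : ∫ t in Iic x, exp (-t ^ 2 / 2) ≤ √(2 * π) := by
    rw [← integral_exp_neg_sq_div_two]
    exact setIntegral_le_integral integrable_exp_neg_sq_div_two
      (ae_of_all _ fun t => (exp_pos _).le)
  calc stdNormalCDF x ≤ (√(2 * π))⁻¹ * √(2 * π) := by rw [stdNormalCDF]; gcongr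
    _ = 1 := inv_mul_cancel₀ (by positivity)

lemma tendsto_stdNormalCDF_atTop : Tendsto stdNormalCDF atTop (𝓝 1) := by
  have hlim := ((aecover_Iic tendsto_id).integral_tendsto_of_countably_generated
    integrable_exp_neg_sq_div_two).const_mul (√(2 * π))⁻¹
  rwa [integral_exp_neg_sq_div_two, inv_mul_cancel₀ (by positivity)] at hlim

lemma hasDerivAt_stdNormalCDF_mul_sqrt (a : ℝ) {ξ : ℝ} (hξ : 0 < ξ) :
    HasDerivAt (fun ξ => stdNormalCDF (a * √ξ))
      ((√(2 * π))⁻¹ * exp (-(a ^ 2 * ξ) / 2) * (a * (1 / (2 * √ξ)))) ξ := by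
  have h := (hasDerivAt_stdNormalCDF (a * √ξ)).comp ξ ((hasDerivAt_sqrt hξ.ne').const_mul a)
  rwa [mul_pow, sq_sqrt hξ.le] at h

lemma integrableOn_exp_mul_stdNormalCDF_comp {c : ℝ} (hc : 0 < c) (a : ℝ) {g : ℝ → ℝ}
    (hg : Measurable g) : IntegrableOn (fun ξ => exp (-c * ξ) * stdNormalCDF (g ξ)) (Ioi a) := by
  refine (exp_neg_integrableOn_Ioi a hc).mono' ?_ (ae_of_all _ fun ξ => ?_)
  · exact ((by fun_prop : Measurable fun ξ : ℝ => exp (-c * ξ)).mul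
      (continuous_stdNormalCDF.measurable.comp hg)).aestronglyMeasurable
  · rw [norm_mul, norm_of_nonneg (exp_pos _).le, norm_of_nonneg (stdNormalCDF_nonneg _)]
    exact mul_le_of_le_one_right (exp_pos _).le (stdNormalCDF_le_one _)

lemma tendsto_exp_mul_stdNormalCDF_comp_atTop {c : ℝ} (hc : 0 < c) (g : ℝ → ℝ) :
    Tendsto (fun ξ => exp (-c * ξ) * stdNormalCDF (g ξ)) atTop (𝓝 0) := by
  have hexp : Tendsto (fun ξ : ℝ => exp (-c * ξ)) atTop (𝓝 0) := by
    simpa only [neg_mul, Function.comp_def, id] using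
      tendsto_exp_neg_atTop_nhds_zero.comp (tendsto_id.const_mul_atTop hc)
  refine squeeze_zero_norm (fun ξ => ?_) hexp
  rw [norm_mul, norm_of_nonneg (exp_pos _).le, norm_of_nonneg (stdNormalCDF_nonneg _)]
  exact mul_le_of_le_one_right (exp_pos _).le (stdNormalCDF_le_one _)

section Primitive

variable (c d : ℝ)

noncomputable def expMulStdNormalCDFPrimitive (ξ : ℝ) : ℝ :=
  (d / √(d ^ 2 + 2 * c) * stdNormalCDF (√(d ^ 2 + 2 * c) * √ξ)
    - exp (-c * ξ) * stdNormalCDF (d * √ξ)) / c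

variable {c}

lemma continuous_expMulStdNormalCDFPrimitive : Continuous (expMulStdNormalCDFPrimitive c d) := by
  unfold expMulStdNormalCDFPrimitive
  have := continuous_stdNormalCDF
  fun_prop

lemma expMulStdNormalCDFPrimitive_zero :
    expMulStdNormalCDFPrimitive c d 0 = (d / √(d ^ 2 + 2 * c) - 1) / (2 * c) := by
  simp only [expMulStdNormalCDFPrimitive, sqrt_zero, mul_zero, exp_zero, stdNormalCDF_zero]
  ring

lemma tendsto_expMulStdNormalCDFPrimitive_atTop (hc : 0 < c) :
    Tendsto (expMulStdNormalCDFPrimitive c d) atTop (𝓝 (d / √(d ^ 2 + 2 * c) / c)) := by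
  have hs : 0 < √(d ^ 2 + 2 * c) := sqrt_pos.2 (by positivity)
  have hN := tendsto_stdNormalCDF_atTop.comp (tendsto_sqrt_atTop.const_mul_atTop hs)
  unfold expMulStdNormalCDFPrimitive
  have hlim := ((hN.const_mul (d / √(d ^ 2 + 2 * c))).sub
    (tendsto_exp_mul_stdNormalCDF_comp_atTop hc fun ξ => d * √ξ)).div_const c
  simpa only [mul_one, sub_zero, Function.comp_def] using hlim

lemma hasDerivAt_expMulStdNormalCDFPrimitive (hc : 0 < c) {ξ : ℝ} (hξ : 0 < ξ) :
    HasDerivAt (expMulStdNormalCDFPrimitive c d) (exp (-c * ξ) * stdNormalCDF (d * √ξ)) ξ := by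
  set s := √(d ^ 2 + 2 * c)
  have hs : 0 < s := sqrt_pos.2 (by positivity)
  have hs2 : s ^ 2 = d ^ 2 + 2 * c := sq_sqrt (by positivity)
  have hexp : HasDerivAt (fun ξ => exp (-c * ξ)) (exp (-c * ξ) * -c) ξ := by
    simpa only [mul_one] using ((hasDerivAt_id' ξ).const_mul (-c)).exp
  have hgauss : exp (-(s ^ 2 * ξ) / 2) = exp (-c * ξ) * exp (-(d ^ 2 * ξ) / 2) := by
    rw [← exp_add, hs2]
    ring_nf
  have h := (((hasDerivAt_stdNormalCDF_mul_sqrt s hξ).const_mul (d / s)).sub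
    (hexp.mul (hasDerivAt_stdNormalCDF_mul_sqrt d hξ))).div_const c
  refine h.congr_deriv ?_
  rw [hgauss]
  field_simp
  ring

end Primitive

/-- For `c > 0` and `d ∈ ℝ`,
`∫₀^∞ e^{−cξ} N(d√ξ) dξ = (1/(2c))·(1 + d/√(d² + 2c))`. -/
theorem integral_exp_mul_stdNormalCDF (c d : ℝ) (hc : 0 < c) :
    ∫ ξ in Set.Ioi (0 : ℝ), Real.exp (-c * ξ) * stdNormalCDF (d * Real.sqrt ξ)
      = (1 / (2 * c)) * (1 + d / Real.sqrt (d ^ 2 + 2 * c)) := by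
  rw [integral_Ioi_of_hasDerivAt_of_tendsto
    (continuous_expMulStdNormalCDFPrimitive d).continuousWithinAt
    (fun ξ hξ => hasDerivAt_expMulStdNormalCDFPrimitive d hc hξ)
    (integrableOn_exp_mul_stdNormalCDF_comp hc 0 (by fun_prop))
    (tendsto_expMulStdNormalCDFPrimitive_atTop d hc), expMulStdNormalCDFPrimitive_zero]
  field_simp
  ring
end

section
/- For any nonzero real numbers a and b, ∫₀^∞ exp(−a²x² − b²/x²) dx = (√π / (2|a|)) · e^{−2|a||b|}. -/
/-!
Completing the square, `a²x² + b²/x² = (|a|x - |b|/x)² + 2|a||b|`, so it suffices to integrate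
`g (c x - d / x)` with `g u = exp (-u²)`, `c = |a|`, `d = |b|`. The Cauchy–Schlömilch substitution
`u = c x - d / x` maps `(0, ∞)` bijectively onto `ℝ` with Jacobian `c + d / x²`, and the inversion
`x ↦ (d / c) / x` turns `u` into `-u` while exchanging the two summands `c` and `d / x²` of the
Jacobian. For even integrable `g` this gives `∫₀^∞ g (c x - d / x) dx = (2c)⁻¹ ∫ g`, and the
Gaussian integral `∫ exp (-u²) = √π` finishes.
-/

open Real Set MeasureTheory

section CauchySchlomilch

variable {E : Type*} [NormedAddCommGroup E] [NormedSpace ℝ E] {c d k : ℝ}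

theorem strictMonoOn_mul_sub_mul_inv (hc : 0 < c) (hd : 0 ≤ d) :
    StrictMonoOn (fun x => c * x - d * x⁻¹) (Ioi 0) := by
  intro x hx y hy hxy
  have : d * y⁻¹ ≤ d * x⁻¹ := mul_le_mul_of_nonneg_left ((inv_le_inv₀ hy hx).2 hxy.le) hd
  dsimp only
  nlinarith

theorem hasDerivAt_mul_sub_mul_inv {x : ℝ} (hx : x ≠ 0) :
    HasDerivAt (fun x => c * x - d * x⁻¹) (c + d / x ^ 2) x :=
  (((hasDerivAt_id' x).const_mul c).sub ((hasDerivAt_inv hx).const_mul d)).congr_deriv (by ring)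

theorem image_mul_sub_mul_inv_Ioi (hc : 0 < c) (hd : 0 < d) :
    (fun x => c * x - d * x⁻¹) '' Ioi 0 = univ := by
  refine eq_univ_of_forall fun u => ?_
  -- the positive root of `c x ^ 2 - u x - d = 0`
  set s := √(u ^ 2 + 4 * c * d)
  have hs : s ^ 2 = u ^ 2 + 4 * c * d := sq_sqrt (by positivity)
  have hus : 0 < u + s := by nlinarith [sqrt_nonneg (u ^ 2 + 4 * c * d), mul_pos hc hd]
  refine ⟨(u + s) / (2 * c), div_pos hus (by positivity), ?_⟩
  field_simp
  linear_combination hs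

theorem integral_comp_const_div_Ioi (hk : 0 < k) (h : ℝ → E) :
    ∫ x in Ioi 0, (k / x ^ 2) • h (k / x) = ∫ x in Ioi 0, h x := by
  have hderiv : ∀ x ∈ Ioi (0 : ℝ), HasDerivWithinAt (fun x => k / x) (-(k / x ^ 2)) (Ioi 0) x :=
    fun x hx => by
      simpa only [div_eq_mul_inv, mul_neg] using
        ((hasDerivAt_inv (ne_of_gt hx)).const_mul k).hasDerivWithinAt
  have hinj : InjOn (fun x => k / x) (Ioi 0) := fun x _ y _ hxy =>
    inv_injective (mul_left_cancel₀ hk.ne' (by simpa only [div_eq_mul_inv] using hxy))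
  have himage : (fun x => k / x) '' Ioi 0 = Ioi 0 :=
    (image_subset_iff.2 fun x (hx : 0 < x) => div_pos hk hx).antisymm fun y (hy : 0 < y) =>
      ⟨k / y, div_pos hk hy, div_div_cancel₀ hk.ne'⟩
  conv_rhs =>
    rw [← himage, integral_image_eq_integral_abs_deriv_smul measurableSet_Ioi hderiv hinj]
  refine setIntegral_congr_fun measurableSet_Ioi fun x (hx : 0 < x) => ?_
  rw [abs_neg, abs_of_pos (by positivity)]

theorem integral_comp_mul_sub_mul_inv_Ioi_of_even (hc : 0 < c) (hd : 0 < d) {g : ℝ → E}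
    (heven : Function.Even g) (hg : Integrable g) :
    ∫ x in Ioi 0, g (c * x - d * x⁻¹) = (2 * c)⁻¹ • ∫ u, g u := by
  set f : ℝ → ℝ := fun x => c * x - d * x⁻¹
  have hderiv : ∀ x ∈ Ioi (0 : ℝ), HasDerivWithinAt f (c + d / x ^ 2) (Ioi 0) x :=
    fun x hx => (hasDerivAt_mul_sub_mul_inv (ne_of_gt hx)).hasDerivWithinAt
  have hinj : InjOn f (Ioi 0) := (strictMonoOn_mul_sub_mul_inv hc hd.le).injOn
  have hjac : EqOn (fun x => |c + d / x ^ 2| • g (f x)) (fun x => (c + d / x ^ 2) • g (f x))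
      (Ioi 0) := fun x _ => by
    dsimp only
    rw [abs_of_pos (by positivity)]
  have hsubst : ∫ u, g u = ∫ x in Ioi 0, (c + d / x ^ 2) • g (f x) := by
    rw [← setIntegral_univ, ← image_mul_sub_mul_inv_Ioi hc hd,
      integral_image_eq_integral_abs_deriv_smul measurableSet_Ioi hderiv hinj,
      setIntegral_congr_fun measurableSet_Ioi hjac]
  have hint_jac : IntegrableOn (fun x => (c + d / x ^ 2) • g (f x)) (Ioi 0) := by
    refine IntegrableOn.congr_fun ?_ hjac measurableSet_Ioi
    rw [← integrableOn_image_iff_integrableOn_abs_deriv_smul measurableSet_Ioi hderiv hinj,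
      image_mul_sub_mul_inv_Ioi hc hd]
    exact hg.integrableOn
  -- `c • g (f x)` is the integrable `(c + d / x ^ 2) • g (f x)` times a factor in `[0, 1]`
  have hint : IntegrableOn (fun x => c • g (f x)) (Ioi 0) := by
    have hbound : ∀ x : ℝ, ‖c * (c + d / x ^ 2)⁻¹‖ ≤ 1 := fun x => by
      rw [norm_of_nonneg (by positivity)]
      exact mul_inv_le_one_of_le₀ (le_add_of_nonneg_right (by positivity)) (by positivity)
    refine IntegrableOn.congr_fun (hint_jac.bdd_smul 1
      (by fun_prop : Measurable fun x : ℝ => c * (c + d / x ^ 2)⁻¹).aestronglyMeasurable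
      (Filter.Eventually.of_forall hbound)) (fun x _ => ?_) measurableSet_Ioi
    show (c * (c + d / x ^ 2)⁻¹) • (c + d / x ^ 2) • g (f x) = c • g (f x)
    rw [smul_smul, mul_assoc, inv_mul_cancel₀ (by positivity), mul_one]
  have hint' : IntegrableOn (fun x => (d / x ^ 2) • g (f x)) (Ioi 0) :=
    (hint_jac.sub hint).congr_fun (fun x _ => by
      show (c + d / x ^ 2) • g (f x) - c • g (f x) = _
      rw [add_smul, add_sub_cancel_left]) measurableSet_Ioi
  -- `x ↦ (d / c) / x` swaps the two summands of the Jacobian, and `f ((d / c) / x) = - f x`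
  have hsymm : ∫ x in Ioi 0, (d / x ^ 2) • g (f x) = ∫ x in Ioi 0, c • g (f x) := by
    rw [← integral_comp_const_div_Ioi (div_pos hd hc) fun x => c • g (f x)]
    refine setIntegral_congr_fun measurableSet_Ioi fun x (hx : 0 < x) => ?_
    have hflip : f (d / c / x) = -f x := by
      simp only [f]
      field_simp
      ring
    rw [hflip, heven, smul_smul]
    congr 1
    field_simp
  have hsplit : ∫ x in Ioi 0, (c + d / x ^ 2) • g (f x) = (2 * c) • ∫ x in Ioi 0, g (f x) := by
    simp_rw [add_smul]
    rw [integral_add hint hint', hsymm, integral_smul, ← two_smul ℝ, smul_smul]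
  rw [hsubst, hsplit, smul_smul, inv_mul_cancel₀ (by positivity), one_smul]

end CauchySchlomilch

/-- For nonzero reals `a`, `b`:
`∫₀^∞ exp(−a²x² − b²/x²) dx = (√π/(2|a|))·e^{−2|a||b|}`. -/
theorem integral_exp_neg_sq_add_inv_sq (a b : ℝ) (ha : a ≠ 0) (hb : b ≠ 0) :
    ∫ x in Set.Ioi (0 : ℝ), Real.exp (-a ^ 2 * x ^ 2 - b ^ 2 / x ^ 2)
      = (Real.sqrt Real.pi / (2 * |a|)) * Real.exp (-2 * |a| * |b|) := by
  have hsq : ∀ x ∈ Ioi (0 : ℝ), exp (-a ^ 2 * x ^ 2 - b ^ 2 / x ^ 2)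
      = exp (-2 * |a| * |b|) * exp (-(|a| * x - |b| * x⁻¹) ^ 2) := fun x (hx : 0 < x) => by
    rw [← exp_add, ← sq_abs a, ← sq_abs b]
    congr 1
    field_simp
    ring
  have hgauss : ∫ u, exp (-u ^ 2) = √π := by simpa using integral_gaussian 1
  rw [setIntegral_congr_fun measurableSet_Ioi hsq, integral_const_mul,
    integral_comp_mul_sub_mul_inv_Ioi_of_even (g := fun u => exp (-u ^ 2)) (abs_pos.2 ha)
      (abs_pos.2 hb) (fun u => by simp) (by simpa using integrable_exp_neg_mul_sq one_pos),
    hgauss, smul_eq_mul]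
  ring
end

section
/- For any nonzero real numbers a and b, ∫₀^∞ (1/x²) · exp(−a²x² − b²/x²) dx = (√π / (2|b|)) · e^{−2|a||b|}. -/
open Real Set MeasureTheory

/-! With `A = |a|` and `B = |b|`, let `I = ∫₀^∞ exp(-A²x² - B²/x²) dx` and
`J = ∫₀^∞ x⁻² exp(-A²x² - B²/x²) dx`. The substitution `x ↦ B / (A x)` shows `A I = B J`.
The substitution `u = A x - B / x`, a bijection of `(0, ∞)` onto `ℝ` with
`du = (A + B / x²) dx`, together with `(A x - B / x)² = A²x² + B²/x² - 2AB`, turns the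
Gaussian integral into `√π = e^{2AB} (A I + B J) = 2B e^{2AB} J`. -/

section ChangeOfVariables

variable {E : Type*} [NormedAddCommGroup E] [NormedSpace ℝ E]

lemma image_inv_Ioi_zero : Inv.inv '' Ioi (0 : ℝ) = Ioi 0 := by
  ext x
  simp

lemma hasDerivWithinAt_inv_Ioi_zero {x : ℝ} (hx : x ∈ Ioi 0) :
    HasDerivWithinAt Inv.inv (-(x ^ 2)⁻¹) (Ioi 0) x :=
  (hasDerivAt_inv (ne_of_gt hx)).hasDerivWithinAt

lemma integral_comp_inv_Ioi (g : ℝ → E) :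
    ∫ x in Ioi 0, (x ^ 2)⁻¹ • g x⁻¹ = ∫ x in Ioi 0, g x := by
  conv_rhs => rw [← image_inv_Ioi_zero]
  rw [integral_image_eq_integral_abs_deriv_smul measurableSet_Ioi
    (fun _ hx => hasDerivWithinAt_inv_Ioi_zero hx) inv_injective.injOn]
  simp only [abs_neg, abs_inv, abs_pow, sq_abs]

lemma integrableOn_Ioi_comp_inv_iff (g : ℝ → E) :
    IntegrableOn (fun x => (x ^ 2)⁻¹ • g x⁻¹) (Ioi 0) ↔ IntegrableOn g (Ioi 0) := by
  conv_rhs => rw [← image_inv_Ioi_zero]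
  rw [integrableOn_image_iff_integrableOn_abs_deriv_smul measurableSet_Ioi
    (fun _ hx => hasDerivWithinAt_inv_Ioi_zero hx) inv_injective.injOn]
  simp only [abs_neg, abs_inv, abs_pow, sq_abs]

variable {A B : ℝ}

lemma strictMonoOn_mul_sub_div (hA : 0 < A) (hB : 0 < B) :
    StrictMonoOn (fun x : ℝ => A * x - B / x) (Ioi 0) := by
  intro x hx y hy hxy
  have h1 : B / y ≤ B / x := div_le_div_of_nonneg_left hB.le hx hxy.le
  have h2 : A * x < A * y := mul_lt_mul_of_pos_left hxy hA
  simp only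
  linarith

lemma image_mul_sub_div_Ioi (hA : 0 < A) (hB : 0 < B) :
    (fun x : ℝ => A * x - B / x) '' Ioi 0 = univ := by
  refine eq_univ_of_forall fun c => ?_
  -- the positive root of `A x² - c x - B = 0`
  set s := √(c ^ 2 + 4 * A * B)
  have hs : s ^ 2 = c ^ 2 + 4 * A * B := sq_sqrt (by positivity)
  have hcs : |c| < s := by
    rw [← sqrt_sq_eq_abs]
    exact sqrt_lt_sqrt (sq_nonneg c) (by nlinarith)
  have hpos : 0 < c + s := by linarith [neg_abs_le c]
  refine ⟨(c + s) / (2 * A), mem_Ioi.mpr (by positivity), ?_⟩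
  field_simp
  linear_combination hs

lemma integral_comp_mul_sub_div_Ioi (hA : 0 < A) (hB : 0 < B) (g : ℝ → E) :
    ∫ x in Ioi 0, (A + B * (x ^ 2)⁻¹) • g (A * x - B / x) = ∫ u, g u := by
  have hderiv : ∀ x ∈ Ioi (0 : ℝ),
      HasDerivWithinAt (fun x => A * x - B / x) (A + B * (x ^ 2)⁻¹) (Ioi 0) x := by
    intro x hx
    have := ((hasDerivAt_id x).const_mul A).sub ((hasDerivAt_inv (mem_Ioi.mp hx).ne').const_mul B)
    simp only [id, mul_one, mul_neg, sub_neg_eq_add, ← div_eq_mul_inv] at this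
    exact this.hasDerivWithinAt
  conv_rhs => rw [← setIntegral_univ, ← image_mul_sub_div_Ioi hA hB]
  rw [integral_image_eq_integral_abs_deriv_smul measurableSet_Ioi hderiv
    (strictMonoOn_mul_sub_div hA hB).injOn]
  refine setIntegral_congr_fun measurableSet_Ioi fun x hx => ?_
  rw [abs_of_pos (by have := mem_Ioi.mp hx; positivity)]

end ChangeOfVariables

section GaussianWithInverseSquare

variable {A B : ℝ}

lemma integrableOn_exp_neg_sq_sub_div_sq (hA : A ≠ 0) (B : ℝ) :
    IntegrableOn (fun x => exp (-A ^ 2 * x ^ 2 - B ^ 2 / x ^ 2)) (Ioi 0) := by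
  refine ((integrable_exp_neg_mul_sq (by positivity : 0 < A ^ 2)).integrableOn).mono'
    (by fun_prop) ((ae_restrict_iff' measurableSet_Ioi).2 (ae_of_all _ fun x _ => ?_))
  rw [norm_of_nonneg (exp_nonneg _), exp_le_exp, neg_mul]
  linarith [div_nonneg (sq_nonneg B) (sq_nonneg x)]

lemma exp_neg_sq_sub_div_sq_comp_inv (A B x : ℝ) :
    exp (-A ^ 2 * x⁻¹ ^ 2 - B ^ 2 / x⁻¹ ^ 2) = exp (-B ^ 2 * x ^ 2 - A ^ 2 / x ^ 2) := by
  rw [inv_pow, div_inv_eq_mul]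
  ring_nf

lemma integral_inv_sq_mul_exp_neg_sq_sub_div_sq_swap (A B : ℝ) :
    ∫ x in Ioi 0, (x ^ 2)⁻¹ * exp (-A ^ 2 * x ^ 2 - B ^ 2 / x ^ 2)
      = ∫ x in Ioi 0, exp (-B ^ 2 * x ^ 2 - A ^ 2 / x ^ 2) := by
  have h := integral_comp_inv_Ioi fun x => exp (-B ^ 2 * x ^ 2 - A ^ 2 / x ^ 2)
  simp only [smul_eq_mul, exp_neg_sq_sub_div_sq_comp_inv B A] at h
  exact h

lemma integrableOn_inv_sq_mul_exp_neg_sq_sub_div_sq (A : ℝ) (hB : B ≠ 0) :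
    IntegrableOn (fun x => (x ^ 2)⁻¹ * exp (-A ^ 2 * x ^ 2 - B ^ 2 / x ^ 2)) (Ioi 0) := by
  simpa only [smul_eq_mul, exp_neg_sq_sub_div_sq_comp_inv B A] using
    (integrableOn_Ioi_comp_inv_iff fun x => exp (-B ^ 2 * x ^ 2 - A ^ 2 / x ^ 2)).2
      (integrableOn_exp_neg_sq_sub_div_sq hB A)

lemma mul_integral_exp_neg_sq_sub_div_sq_comm (hA : 0 < A) (hB : 0 < B) :
    A * ∫ x in Ioi 0, exp (-A ^ 2 * x ^ 2 - B ^ 2 / x ^ 2)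
      = B * ∫ x in Ioi 0, exp (-B ^ 2 * x ^ 2 - A ^ 2 / x ^ 2) := by
  have hscale := integral_comp_mul_left_Ioi'
    (fun x => exp (-A ^ 2 * x ^ 2 - B ^ 2 / x ^ 2)) 0 (div_pos hB hA)
  rw [mul_zero, smul_eq_mul] at hscale
  rw [← hscale, ← mul_assoc, mul_div_cancel₀ _ hA.ne']
  congr 2 with x
  congr 1
  field_simp

lemma exp_neg_sq_mul_sub_div (A B : ℝ) {x : ℝ} (hx : x ≠ 0) :
    exp (-(A * x - B / x) ^ 2) = exp (2 * A * B) * exp (-A ^ 2 * x ^ 2 - B ^ 2 / x ^ 2) := by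
  rw [← exp_add]
  congr 1
  field_simp
  ring

lemma integral_mul_exp_neg_sq_mul_sub_div (hA : 0 < A) (hB : 0 < B) :
    ∫ x in Ioi 0, (A + B * (x ^ 2)⁻¹) * exp (-(A * x - B / x) ^ 2) = √π := by
  have hgauss : ∫ u : ℝ, exp (-u ^ 2) = √π := by simpa using integral_gaussian 1
  exact (integral_comp_mul_sub_div_Ioi hA hB fun u => exp (-u ^ 2)).trans hgauss

theorem integral_inv_sq_mul_exp_neg_sq_sub_div_sq (hA : 0 < A) (hB : 0 < B) :
    ∫ x in Ioi 0, (x ^ 2)⁻¹ * exp (-A ^ 2 * x ^ 2 - B ^ 2 / x ^ 2)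
      = √π / (2 * B) * exp (-2 * A * B) := by
  have hIJ := mul_integral_exp_neg_sq_sub_div_sq_comm hA hB
  rw [← integral_inv_sq_mul_exp_neg_sq_sub_div_sq_swap A B] at hIJ
  set I := ∫ x in Ioi 0, exp (-A ^ 2 * x ^ 2 - B ^ 2 / x ^ 2)
  set J := ∫ x in Ioi 0, (x ^ 2)⁻¹ * exp (-A ^ 2 * x ^ 2 - B ^ 2 / x ^ 2)
  have hpi : √π = exp (2 * A * B) * (A * I + B * J) := by
    rw [← integral_mul_exp_neg_sq_mul_sub_div hA hB, ← integral_const_mul A,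
      ← integral_const_mul B, ← integral_add, ← integral_const_mul]
    · refine setIntegral_congr_fun measurableSet_Ioi fun x hx => ?_
      rw [exp_neg_sq_mul_sub_div A B (ne_of_gt hx)]
      ring
    · exact (integrableOn_exp_neg_sq_sub_div_sq hA.ne' B).const_mul A
    · exact (integrableOn_inv_sq_mul_exp_neg_sq_sub_div_sq A hB.ne').const_mul B
  rw [hIJ] at hpi
  rw [show -2 * A * B = -(2 * A * B) by ring, exp_neg, hpi]
  field_simp
  ring

end GaussianWithInverseSquare

/-- For nonzero reals `a`, `b`:
`∫₀^∞ (1/x²)·exp(−a²x² − b²/x²) dx = (√π/(2|b|))·e^{−2|a||b|}`. -/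
theorem integral_inv_sq_mul_exp_neg_sq_add_inv_sq (a b : ℝ) (ha : a ≠ 0) (hb : b ≠ 0) :
    ∫ x in Set.Ioi (0 : ℝ), (1 / x ^ 2) * Real.exp (-a ^ 2 * x ^ 2 - b ^ 2 / x ^ 2)
      = (Real.sqrt Real.pi / (2 * |b|)) * Real.exp (-2 * |a| * |b|) := by
  have h := integral_inv_sq_mul_exp_neg_sq_sub_div_sq (abs_pos.2 ha) (abs_pos.2 hb)
  simp only [sq_abs] at h
  simpa only [one_div] using h
end

section
/- Under the standing assumptions, the constant z_∞ := (ρ̂(α₋γ + γ − 1)/(Kα₋γ))^{γ/(γ−1)} satisfies 0 < z_∞ < 1, where α₋ is the negative root of f(α) = (γ²σ²/2)α² + (r̂ − ρ̂ + γ²σ²/2)α − ρ̂ = 0. -/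
open Real

/-!
The root equation turns the gap between denominator and numerator of the base into
`Kα₋γ − ρ̂(α₋γ + γ − 1) = (1 − γ) · (γσ²/2) α₋ (α₋γ + γ − 1)`, whose second factor is positive
since `α₋ < −1`. As the denominator is negative, the base exceeds `1` exactly when `γ < 1`,
which is exactly when the exponent `γ/(γ − 1)` is negative.
-/

theorem rpow_div_sub_one_lt_one {b γ : ℝ} (hb : 0 < b) (hγ : 0 < γ)
    (h : 0 < (1 - γ) * (b - 1)) : b ^ (γ / (γ - 1)) < 1 := by
  rcases pos_and_pos_or_neg_and_neg_of_mul_pos h with ⟨hγ1, hb1⟩ | ⟨hγ1, hb1⟩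
  · exact rpow_lt_one_of_one_lt_of_neg (by linarith) (div_neg_of_pos_of_neg hγ (by linarith))
  · exact rpow_lt_one hb.le (by linarith) (div_pos hγ (by linarith))

theorem mul_div_sub_one_pos {N D t E : ℝ} (hD : D < 0) (ht : t ≠ 0) (hE : 0 < E)
    (h : D - N = t * E) : 0 < t * (N / D - 1) := by
  have hform : t * (N / D - 1) = t ^ 2 * E / -D := by
    field_simp [hD.ne]
    linear_combination -h
  rw [hform]
  exact div_pos (by positivity) (neg_pos.2 hD)

theorem K_mul_sub_ρhat_mul_eq_of_root {γ σ μ r ρ rhat ρhat K α : ℝ} (hγ : γ ≠ 0)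
    (hrhat : rhat = r - μ)
    (hρhat : ρhat = ρ - (1 - γ) * μ + (1 / 2) * γ * (1 - γ) * σ ^ 2)
    (hK : K = r + (ρ - r) / γ)
    (hroot : γ ^ 2 * σ ^ 2 / 2 * α ^ 2 + (rhat - ρhat + γ ^ 2 * σ ^ 2 / 2) * α - ρhat = 0) :
    K * α * γ - ρhat * (α * γ + γ - 1) = (1 - γ) * (γ * σ ^ 2 / 2 * α * (α * γ + γ - 1)) := by
  have hKγ : K * γ = r * γ + (ρ - r) := by
    rw [hK]
    field_simp
  subst hrhat hρhat
  linear_combination α * hKγ - (1 - γ) * hroot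

theorem z_infty_lt_one_general
    (γ σ μ r ρ rhat ρhat K αm : ℝ)
    (hγ : 0 < γ) (hγ1 : γ ≠ 1) (hσ : 0 < σ)
    (hrhat : rhat = r - μ)
    (hρhat : ρhat = ρ - (1 - γ) * μ + (1 / 2) * γ * (1 - γ) * σ ^ 2) (hρhat_pos : 0 < ρhat)
    (hK : K = r + (ρ - r) / γ) (hK_pos : 0 < K)
    (hαm : αm < -1)
    (hroot : γ ^ 2 * σ ^ 2 / 2 * αm ^ 2 + (rhat - ρhat + γ ^ 2 * σ ^ 2 / 2) * αm - ρhat = 0) :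
    0 < (ρhat * (αm * γ + γ - 1) / (K * αm * γ)) ^ (γ / (γ - 1)) ∧
      (ρhat * (αm * γ + γ - 1) / (K * αm * γ)) ^ (γ / (γ - 1)) < 1 := by
  have hα : αm < 0 := by linarith
  have hs : αm * γ + γ - 1 < 0 := by nlinarith
  have hden : K * αm * γ < 0 := mul_neg_of_neg_of_pos (mul_neg_of_pos_of_neg hK_pos hα) hγ
  have hbase : 0 < ρhat * (αm * γ + γ - 1) / (K * αm * γ) :=
    div_pos_of_neg_of_neg (mul_neg_of_pos_of_neg hρhat_pos hs) hden
  have hgap : 0 < γ * σ ^ 2 / 2 * αm * (αm * γ + γ - 1) :=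
    mul_pos_of_neg_of_neg (mul_neg_of_pos_of_neg (by positivity) hα) hs
  refine ⟨rpow_pos_of_pos hbase _, rpow_div_sub_one_lt_one hbase hγ ?_⟩
  exact mul_div_sub_one_pos hden (sub_ne_zero.2 hγ1.symm) hgap
    (K_mul_sub_ρhat_mul_eq_of_root hγ.ne' hrhat hρhat hK hroot)

/-- Under the standing assumptions, `z_∞ = (ρ̂(α₋γ + γ − 1)/(Kα₋γ))^{γ/(γ−1)}`
satisfies `0 < z_∞ < 1`, where `α₋ < −1` is the negative root of
`(γ²σ²/2)α² + (r̂ − ρ̂ + γ²σ²/2)α − ρ̂ = 0`. -/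
theorem z_infty_lt_one
    (γ σ μ r ρ rhat ρhat K αm : ℝ)
    (hr : 0 < r) (hrρ : r ≤ ρ) (hγ : 0 < γ) (hγ1 : γ ≠ 1) (hσ : 0 < σ)
    (hμ : σ ^ 2 / 2 < μ)
    (hrhat : rhat = r - μ) (hrhat_pos : 0 < rhat)
    (hρhat : ρhat = ρ - (1 - γ) * μ + (1 / 2) * γ * (1 - γ) * σ ^ 2) (hρhat_pos : 0 < ρhat)
    (hK : K = r + (ρ - r) / γ) (hK_pos : 0 < K)
    (hαm : αm < -1)
    (hroot : γ ^ 2 * σ ^ 2 / 2 * αm ^ 2 + (rhat - ρhat + γ ^ 2 * σ ^ 2 / 2) * αm - ρhat = 0) :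
    0 < (ρhat * (αm * γ + γ - 1) / (K * αm * γ)) ^ (γ / (γ - 1)) ∧
      (ρhat * (αm * γ + γ - 1) / (K * αm * γ)) ^ (γ / (γ - 1)) < 1 :=
  z_infty_lt_one_general γ σ μ r ρ rhat ρhat K αm hγ hγ1 hσ hrhat hρhat hρhat_pos hK hK_pos hαm
    hroot
end
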